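/- arXiv:2507.12294 — 3 statements merged into one kernel-verified Lean document; each statement's English description precedes it below -/
import Mathlib

section
/- For vectors A, B in ℝ^N and p ≥ 2, one has (|A|^{p-2}A - |B|^{p-2}B) · (A - B) ≥ |A - B|^p / 2^{p-2}. -/
open Real MeasureTheory
open scoped RealInnerProductSpace

lemma aux_pm {a b s : ℝ} (ha : 0 ≤ a) (hb : 0 ≤ b) (hs : 1 ≤ s) :
    (a + b) ^ s ≤ (2:ℝ) ^ (s - 1) * (a ^ s + b ^ s) := by
  lift a to NNReal using ha
  lift b to NNReal using hb
  have := NNReal.rpow_add_le_mul_rpow_add_rpow a b hs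
  exact_mod_cast this

lemma aux_key {a b t X Y T P W : ℝ} (ha : 0 ≤ a) (hb : 0 ≤ b) (ht : 0 ≤ t)
    (htab : t ≤ a + b) (_hX : 0 ≤ X) (_hY : 0 ≤ Y) (_hT : 0 ≤ T) (hW : 0 < W)
    (hS : 0 ≤ (X - Y) * (a ^ 2 - b ^ 2)) (hTP : T ≤ P)
    (hPM : P * (a + b) ≤ W * (X * a + Y * b)) :
    T * t ^ 2 / W ≤ X * a ^ 2 + Y * b ^ 2 - (X + Y) * ((a ^ 2 + b ^ 2 - t ^ 2) / 2) := by
  rw [div_le_iff₀ hW]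
  have ht2 : t ^ 2 ≤ (a + b) ^ 2 := by nlinarith
  rcases le_or_gt P (W * (X + Y) / 2) with hD | hD
  · nlinarith [mul_le_mul_of_nonneg_right hTP (sq_nonneg t),
      mul_le_mul_of_nonneg_right hD (sq_nonneg t),
      mul_nonneg hW.le hS]
  · nlinarith [mul_le_mul_of_nonneg_right hTP (sq_nonneg t),
      mul_nonneg (by linarith : (0:ℝ) ≤ P - W * (X + Y) / 2) (by linarith : (0:ℝ) ≤ (a+b)^2 - t^2),
      mul_le_mul_of_nonneg_right hPM (by linarith : (0:ℝ) ≤ a + b),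
      mul_nonneg hW.le hS]

/-- For vectors `A, B ∈ ℝ^N` and `p ≥ 2`,
`(|A|^{p-2}A - |B|^{p-2}B) · (A - B) ≥ |A - B|^p / 2^{p-2}`. -/
theorem plaplacian_monotonicity_p_ge_two (N : ℕ) (p : ℝ) (hp : 2 ≤ p)
    (A B : EuclideanSpace ℝ (Fin N)) :
    ⟪(‖A‖ ^ (p - 2)) • A - (‖B‖ ^ (p - 2)) • B, A - B⟫ ≥ ‖A - B‖ ^ p / 2 ^ (p - 2) := by
  set q : ℝ := p - 2 with hq
  have hq0 : 0 ≤ q := by linarith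
  set a : ℝ := ‖A‖ with hadef
  set b : ℝ := ‖B‖ with hbdef
  set t : ℝ := ‖A - B‖ with htdef
  have ha : 0 ≤ a := norm_nonneg _
  have hb : 0 ≤ b := norm_nonneg _
  have ht : 0 ≤ t := norm_nonneg _
  have htab : t ≤ a + b := norm_sub_le _ _
  -- expand the inner product
  have hexp : ⟪(a ^ q) • A - (b ^ q) • B, A - B⟫ =
      a ^ q * (a ^ 2) + b ^ q * (b ^ 2) - (a ^ q + b ^ q) * ⟪A, B⟫ := by
    rw [inner_sub_left, real_inner_smul_left, real_inner_smul_left, inner_sub_right,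
      inner_sub_right, real_inner_self_eq_norm_sq, real_inner_self_eq_norm_sq,
      real_inner_comm B A]
    ring
  have hABc : ⟪A, B⟫ = (a ^ 2 + b ^ 2 - t ^ 2) / 2 := by
    have := norm_sub_sq_real A B
    rw [← hadef, ← hbdef, ← htdef] at this
    linarith
  rw [hexp, hABc]
  -- rpow manipulations
  have hp2 : t ^ p = t ^ q * t ^ 2 := by
    have hpq : p = q + 2 := by ring
    rw [hpq, Real.rpow_add' ht (by positivity), Real.rpow_two]
  have hTP : t ^ q ≤ (a + b) ^ q := Real.rpow_le_rpow ht htab hq0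
  have hS : 0 ≤ (a ^ q - b ^ q) * (a ^ 2 - b ^ 2) := by
    rcases le_total a b with h | h
    · have h1 : a ^ q ≤ b ^ q := Real.rpow_le_rpow ha h hq0
      have h2 : a ^ 2 ≤ b ^ 2 := by nlinarith
      nlinarith
    · have h1 : b ^ q ≤ a ^ q := Real.rpow_le_rpow hb h hq0
      have h2 : b ^ 2 ≤ a ^ 2 := by nlinarith
      nlinarith
  have hW : (0:ℝ) < 2 ^ q := Real.rpow_pos_of_pos (by norm_num) q
  have hPM : (a + b) ^ q * (a + b) ≤ 2 ^ q * (a ^ q * a + b ^ q * b) := by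
    have h1 := aux_pm ha hb (by linarith : 1 ≤ q + 1)
    have e : ∀ x : ℝ, 0 ≤ x → x ^ (q + 1) = x ^ q * x := fun x hx => by
      rw [Real.rpow_add' hx (by positivity), Real.rpow_one]
    rw [e _ (by linarith : (0:ℝ) ≤ a + b), e a ha, e b hb] at h1
    simpa [add_sub_cancel_right, mul_add] using h1
  rw [ge_iff_le, hp2]
  exact aux_key ha hb ht htab (Real.rpow_nonneg ha q) (Real.rpow_nonneg hb q)
    (Real.rpow_nonneg ht q) hW hS hTP hPM
end

section
/- For vectors A, B in ℝ^N and 1 < p ≤ 2, one has (|A|^{p-2}A - |B|^{p-2}B) · (A - B) ≥ (p-1)|A - B|^2 / (1 + |A|^2 + |B|^2)^{(2-p)/2}, where the flux |A|^{p-2}A is interpreted as 0 when A = 0. -/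
set_option maxHeartbeats 1000000

open Real MeasureTheory
open scoped RealInnerProductSpace

private lemma rpow_mul_self (a q : ℝ) (ha : 0 ≤ a) (hq : q + 1 ≠ 0) :
    a ^ q * a = a ^ (q + 1) := by
  rcases eq_or_lt_of_le ha with h | h
  · simp [← h, Real.zero_rpow hq]
  · rw [Real.rpow_add h q 1, Real.rpow_one]

private lemma tangent_line (q a b : ℝ) (hq0 : 0 < q) (hq1 : q ≤ 1) (ha : 0 < a) (hb : 0 ≤ b) :
    q * a ^ (q - 1) * (a - b) ≤ a ^ q - b ^ q := by
  have hs : (-1 : ℝ) ≤ b / a - 1 := by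
    have : 0 ≤ b / a := div_nonneg hb ha.le
    linarith
  have hber := rpow_one_add_le_one_add_mul_self hs hq0.le hq1
  have h1 : (1 : ℝ) + (b / a - 1) = b / a := by ring
  rw [h1, Real.div_rpow hb ha.le] at hber
  have haq : 0 < a ^ q := Real.rpow_pos_of_pos ha q
  have h2 : b ^ q ≤ a ^ q * (1 + q * (b / a - 1)) := by
    rw [← div_le_iff₀' haq]
    exact hber
  have h3 : a ^ (q - 1) * a = a ^ q := by
    rw [rpow_mul_self a (q - 1) ha.le (by linarith)]
    ring_nf
  have h5 : a ^ q * (b / a) = a ^ (q - 1) * b := by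
    rw [← h3]
    field_simp
  have h2' : b ^ q ≤ a ^ q + q * (a ^ (q - 1) * b) - q * a ^ q := by
    have e : a ^ q * (1 + q * (b / a - 1)) = a ^ q + q * (a ^ q * (b / a)) - q * a ^ q := by
      ring
    rw [e, h5] at h2
    exact h2
  have h6 : q * a ^ q = q * (a ^ (q - 1) * a) := by rw [h3]
  linarith [h2', h6]

private lemma rpow_ge_S (p a b : ℝ) (hp2 : p ≤ 2) (ha : 0 < a) :
    (1 + a ^ 2 + b ^ 2) ^ ((p - 2) / 2) ≤ a ^ (p - 2) := by
  have ha2 : (0 : ℝ) < a ^ 2 := by positivity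
  have hle : a ^ 2 ≤ 1 + a ^ 2 + b ^ 2 := by nlinarith
  have h1 : (a ^ 2 : ℝ) ^ ((p - 2) / 2) = a ^ (p - 2) := by
    rw [← Real.rpow_natCast a 2, ← Real.rpow_mul ha.le]
    norm_num
    congr 1
    ring
  rw [← h1]
  exact Real.rpow_le_rpow_of_nonpos ha2 hle (by linarith)

/-- `(p-1) * S^((p-2)/2) * a ≤ a^(p-1)` -/
private lemma E2 (p a b : ℝ) (hp1 : 1 < p) (hp2 : p ≤ 2) (ha : 0 ≤ a) :
    (p - 1) * (1 + a ^ 2 + b ^ 2) ^ ((p - 2) / 2) * a ≤ a ^ (p - 1) := by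
  rcases eq_or_lt_of_le ha with h | h
  · rw [← h, Real.zero_rpow (by linarith : p - 1 ≠ 0)]; simp
  · have h1 := rpow_ge_S p a b hp2 h
    have h2 : a ^ (p - 2) * a = a ^ (p - 1) := by
      rw [rpow_mul_self a (p - 2) h.le (by linarith)]; ring_nf
    have h3 : (1 + a ^ 2 + b ^ 2) ^ ((p - 2) / 2) * a ≤ a ^ (p - 2) * a :=
      mul_le_mul_of_nonneg_right h1 h.le
    have h4 : 0 ≤ (1 + a ^ 2 + b ^ 2) ^ ((p - 2) / 2) * a := by positivity
    have h5 : 0 ≤ (2 - p) * ((1 + a ^ 2 + b ^ 2) ^ ((p - 2) / 2) * a) :=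
      mul_nonneg (by linarith) h4
    linarith
/-- `(p-1) * S^((p-2)/2) * (a - b) ≤ a^(p-1) - b^(p-1)` for `0 ≤ b ≤ a` -/
private lemma E1 (p a b : ℝ) (hp1 : 1 < p) (hp2 : p ≤ 2) (hb : 0 ≤ b) (hba : b ≤ a) :
    (p - 1) * (1 + a ^ 2 + b ^ 2) ^ ((p - 2) / 2) * (a - b) ≤ a ^ (p - 1) - b ^ (p - 1) := by
  rcases eq_or_lt_of_le (hb.trans hba) with h | h
  · have hb0 : b = 0 := le_antisymm (hba.trans h.symm.le) hb
    rw [← h, hb0]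
    simp
  · have htan := tangent_line (p - 1) a b (by linarith) (by linarith) h hb
    have h1 := rpow_ge_S p a b hp2 h
    have hab : (0 : ℝ) ≤ (p - 1) * (a - b) := mul_nonneg (by linarith) (by linarith)
    have h2 : p - 1 - 1 = p - 2 := by ring
    rw [h2] at htan
    have h3 := mul_le_mul_of_nonneg_right h1 hab
    nlinarith [h3, htan]

private lemma key (p a b t : ℝ) (hp1 : 1 < p) (hp2 : p ≤ 2) (ha : 0 ≤ a) (hb : 0 ≤ b)
    (htl : -(a * b) ≤ t) (htu : t ≤ a * b) :
    (p - 1) * (a ^ 2 + b ^ 2 - 2 * t) / (1 + a ^ 2 + b ^ 2) ^ ((2 - p) / 2) ≤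
      a ^ (p - 2) * a ^ 2 + b ^ (p - 2) * b ^ 2 - (a ^ (p - 2) + b ^ (p - 2)) * t := by
  have hS : (0 : ℝ) < 1 + a ^ 2 + b ^ 2 := by positivity
  have hSpos := Real.rpow_pos_of_pos hS ((2 - p) / 2)
  have hSpos' := Real.rpow_nonneg hS.le ((p - 2) / 2)
  have hSid : (1 + a ^ 2 + b ^ 2) ^ ((p - 2) / 2) * (1 + a ^ 2 + b ^ 2) ^ ((2 - p) / 2) = 1 := by
    rw [← Real.rpow_add hS]
    rw [show (p - 2) / 2 + (2 - p) / 2 = 0 by ring, Real.rpow_zero]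
  rw [div_le_iff₀ hSpos]
  have hxa : a ^ (p - 2) * a = a ^ (p - 1) := by
    rw [rpow_mul_self a (p - 2) ha (by linarith)]; ring_nf
  have hyb : b ^ (p - 2) * b = b ^ (p - 1) := by
    rw [rpow_mul_self b (p - 2) hb (by linarith)]; ring_nf
  have hxa2 : a ^ (p - 2) * a ^ 2 = a ^ (p - 1) * a := by rw [← hxa]; ring
  have hyb2 : b ^ (p - 2) * b ^ 2 = b ^ (p - 1) * b := by rw [← hyb]; ring
  have hxab : a ^ (p - 2) * (a * b) = a ^ (p - 1) * b := by rw [← hxa]; ring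
  have hyab : b ^ (p - 2) * (a * b) = b ^ (p - 1) * a := by rw [← hyb]; ring
  have main : (p - 1) * (1 + a ^ 2 + b ^ 2) ^ ((p - 2) / 2) * (a ^ 2 + b ^ 2 - 2 * t) ≤
      a ^ (p - 2) * a ^ 2 + b ^ (p - 2) * b ^ 2 - (a ^ (p - 2) + b ^ (p - 2)) * t := by
    have hE2a := E2 p a b hp1 hp2 ha
    have hE2b := E2 p b a hp1 hp2 hb
    have hcomm : (1 : ℝ) + b ^ 2 + a ^ 2 = 1 + a ^ 2 + b ^ 2 := by ring
    rw [hcomm] at hE2b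
    -- endpoint at t = -ab
    have hend2 : (p - 1) * (1 + a ^ 2 + b ^ 2) ^ ((p - 2) / 2) * (a + b) ^ 2 ≤
        (a ^ (p - 1) + b ^ (p - 1)) * (a + b) := by
      have hsum : (p - 1) * (1 + a ^ 2 + b ^ 2) ^ ((p - 2) / 2) * (a + b) ≤
          a ^ (p - 1) + b ^ (p - 1) := by linarith
      have := mul_le_mul_of_nonneg_right hsum (by linarith : (0:ℝ) ≤ a + b)
      nlinarith [this]
    -- endpoint at t = ab
    have hend1 : (p - 1) * (1 + a ^ 2 + b ^ 2) ^ ((p - 2) / 2) * (a - b) ^ 2 ≤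
        (a ^ (p - 1) - b ^ (p - 1)) * (a - b) := by
      rcases le_total b a with hba | hab
      · have hE := E1 p a b hp1 hp2 hb hba
        have := mul_le_mul_of_nonneg_right hE (by linarith : (0:ℝ) ≤ a - b)
        nlinarith [this]
      · have hE := E1 p b a hp1 hp2 ha hab
        rw [hcomm] at hE
        have := mul_le_mul_of_nonneg_right hE (by linarith : (0:ℝ) ≤ b - a)
        nlinarith [this]
    rcases le_total (2 * ((p - 1) * (1 + a ^ 2 + b ^ 2) ^ ((p - 2) / 2)))
        (a ^ (p - 2) + b ^ (p - 2)) with hm | hm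
    · have h5 := mul_le_mul_of_nonneg_left htu
        (by linarith : (0:ℝ) ≤ a ^ (p - 2) + b ^ (p - 2)
          - 2 * ((p - 1) * (1 + a ^ 2 + b ^ 2) ^ ((p - 2) / 2)))
      linarith [h5, hend1, hxa2, hyb2, hxab, hyab]
    · have h5 := mul_le_mul_of_nonneg_left htl
        (by linarith : (0:ℝ) ≤ 2 * ((p - 1) * (1 + a ^ 2 + b ^ 2) ^ ((p - 2) / 2))
          - (a ^ (p - 2) + b ^ (p - 2)))
      linarith [h5, hend2, hxa2, hyb2, hxab, hyab]
  have hc1 : (p - 1) * (a ^ 2 + b ^ 2 - 2 * t) =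
      (p - 1) * (1 + a ^ 2 + b ^ 2) ^ ((p - 2) / 2) * (a ^ 2 + b ^ 2 - 2 * t) *
        (1 + a ^ 2 + b ^ 2) ^ ((2 - p) / 2) := by
    linear_combination (-((p - 1) * (a ^ 2 + b ^ 2 - 2 * t))) * hSid
  rw [hc1]
  exact mul_le_mul_of_nonneg_right main hSpos.le

/-- For vectors `A, B ∈ ℝ^N` and `1 < p ≤ 2`,
`(|A|^{p-2}A - |B|^{p-2}B) · (A - B) ≥ (p-1)|A - B|^2 / (1 + |A|^2 + |B|^2)^{(2-p)/2}`,
where the flux `|A|^{p-2}A` is interpreted as `0` when `A = 0` (which is automatic for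
real powers, since `0 ^ (p-2) = 0` for `p < 2` and `0 • A = 0`). -/
theorem plaplacian_monotonicity_p_le_two (N : ℕ) (p : ℝ) (hp1 : 1 < p) (hp2 : p ≤ 2)
    (A B : EuclideanSpace ℝ (Fin N)) :
    ⟪(‖A‖ ^ (p - 2)) • A - (‖B‖ ^ (p - 2)) • B, A - B⟫ ≥
      (p - 1) * ‖A - B‖ ^ 2 / (1 + ‖A‖ ^ 2 + ‖B‖ ^ 2) ^ ((2 - p) / 2) := by
  have hCS := abs_real_inner_le_norm A B
  rw [abs_le] at hCS
  have hinner : ⟪(‖A‖ ^ (p - 2)) • A - (‖B‖ ^ (p - 2)) • B, A - B⟫ =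
      ‖A‖ ^ (p - 2) * ‖A‖ ^ 2 + ‖B‖ ^ (p - 2) * ‖B‖ ^ 2 -
        (‖A‖ ^ (p - 2) + ‖B‖ ^ (p - 2)) * ⟪A, B⟫ := by
    simp only [inner_sub_left, inner_sub_right, real_inner_smul_left,
      real_inner_self_eq_norm_sq, real_inner_comm B A]
    ring
  have hnorm : ‖A - B‖ ^ 2 = ‖A‖ ^ 2 + ‖B‖ ^ 2 - 2 * ⟪A, B⟫ := by
    rw [@norm_sub_sq_real]; ring
  rw [ge_iff_le, hinner, hnorm]
  exact key p ‖A‖ ‖B‖ ⟪A, B⟫ hp1 hp2 (norm_nonneg A) (norm_nonneg B) hCS.1 hCS.2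
end

section
/- Let Ω ⊂ ℝ^N be a bounded open set and 1 < p < ∞. There are constants C = max{2^{p-2}, (2^{(2-p)/2}/(p-1))^{p/2}}, α = min{p/2, 1}, β = max{2/(2-p), 0} such that for all u, v ∈ W^{1,p}_0(Ω): ‖u - v‖_{W^{1,p}_0}^p ≤ C ( ∫_Ω (|∇u|^{p-2}∇u - |∇v|^{p-2}∇v) · (∇u - ∇v) )^α (1 + ‖∇u‖_{L^p}^p + ‖∇v‖_{L^p}^p)^β. -/
open Real MeasureTheory
open scoped RealInnerProductSpace

namespace PLaplaceAux

lemma rpow_sub_two_mul {z p : ℝ} (hz : 0 ≤ z) (hp : 1 < p) :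
    z ^ (p - 2) * z = z ^ (p - 1) := by
  rcases eq_or_lt_of_le hz with h | h
  · rw [← h, Real.zero_rpow (by linarith : p - 1 ≠ 0), mul_zero]
  · nth_rewrite 2 [show z = z ^ (1:ℝ) by rw [Real.rpow_one]]
    rw [← Real.rpow_add h]; ring_nf

lemma rpow_sub_one_mul {z p : ℝ} (hz : 0 ≤ z) (hp : 0 < p) :
    z ^ (p - 1) * z = z ^ p := by
  rcases eq_or_lt_of_le hz with h | h
  · rw [← h, Real.zero_rpow (by linarith : p ≠ 0), mul_zero]
  · nth_rewrite 2 [show z = z ^ (1:ℝ) by rw [Real.rpow_one]]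
    rw [← Real.rpow_add h]; ring_nf

lemma sq_rpow_half {z p : ℝ} (hz : 0 ≤ z) : (z ^ 2) ^ (p / 2) = z ^ p := by
  rw [← Real.rpow_natCast z 2, ← Real.rpow_mul hz]
  rw [show ((2:ℕ):ℝ) * (p / 2) = p by push_cast; ring]

lemma rpow_superadd {x y q : ℝ} (hx : 0 ≤ x) (hy : 0 ≤ y) (hq : 1 ≤ q) :
    x ^ q + y ^ q ≤ (x + y) ^ q := by
  have h := NNReal.add_rpow_le_rpow_add x.toNNReal y.toNNReal hq
  have := NNReal.coe_le_coe.2 h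
  push_cast [NNReal.coe_rpow, Real.coe_toNNReal x hx, Real.coe_toNNReal y hy] at this
  convert this using 2

lemma rpow_add_le {x y q : ℝ} (hx : 0 ≤ x) (hy : 0 ≤ y) (hq : 1 ≤ q) :
    (x + y) ^ q ≤ 2 ^ (q - 1) * (x ^ q + y ^ q) := by
  have h := NNReal.rpow_add_le_mul_rpow_add_rpow x.toNNReal y.toNNReal hq
  have := NNReal.coe_le_coe.2 h
  push_cast [NNReal.coe_rpow, Real.coe_toNNReal x hx, Real.coe_toNNReal y hy] at this
  convert this using 2

lemma rpow_subadd {x y q : ℝ} (hx : 0 ≤ x) (hy : 0 ≤ y) (hq0 : 0 ≤ q) (hq1 : q ≤ 1) :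
    (x + y) ^ q ≤ x ^ q + y ^ q := by
  have h := NNReal.rpow_add_le_add_rpow x.toNNReal y.toNNReal hq0 hq1
  have := NNReal.coe_le_coe.2 h
  push_cast [NNReal.coe_rpow, Real.coe_toNNReal x hx, Real.coe_toNNReal y hy] at this
  convert this using 2

-- Endpoint E+ : 2^(2-p) (x+y)^p ≤ x^p + y^p + (x^(p-2)+y^(p-2)) x y,  p ≥ 2
lemma Eplus {x y p : ℝ} (hx : 0 ≤ x) (hy : 0 ≤ y) (hp : 2 ≤ p) :
    2 ^ (2 - p) * (x + y) ^ p ≤ x ^ p + y ^ p + (x ^ (p-2) + y ^ (p-2)) * (x * y) := by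
  have hp1 : (1:ℝ) < p := by linarith
  have h1 : (x + y) ^ (p - 1) ≤ 2 ^ (p - 2) * (x ^ (p-1) + y ^ (p-1)) := by
    have := rpow_add_le hx hy (by linarith : (1:ℝ) ≤ p - 1)
    rwa [show p - 1 - 1 = p - 2 by ring] at this
  have h2 : (x + y) ^ p = (x + y) ^ (p - 1) * (x + y) :=
    (rpow_sub_one_mul (by linarith) (by linarith)).symm
  have hc : (0:ℝ) < 2 ^ (2 - p) := Real.rpow_pos_of_pos two_pos _
  have h3 : 2 ^ (2-p) * (x+y)^p ≤ 2 ^ (2-p) * (2 ^ (p-2) * (x ^ (p-1) + y ^ (p-1)) * (x+y)) := by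
    rw [h2]
    apply mul_le_mul_of_nonneg_left _ hc.le
    exact mul_le_mul_of_nonneg_right h1 (by linarith)
  have h4 : (2:ℝ) ^ (2-p) * 2 ^ (p-2) = 1 := by
    rw [← Real.rpow_add two_pos]; norm_num
  calc 2 ^ (2-p) * (x+y)^p ≤ 2 ^ (2-p) * (2 ^ (p-2) * (x ^ (p-1) + y ^ (p-1)) * (x+y)) := h3
    _ = (x ^ (p-1) + y ^ (p-1)) * (x + y) := by
        rw [show 2 ^ (2-p) * (2 ^ (p-2) * (x ^ (p-1) + y ^ (p-1)) * (x+y))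
          = (2 ^ (2-p) * 2 ^ (p-2)) * ((x ^ (p-1) + y ^ (p-1)) * (x+y)) by ring, h4, one_mul]
    _ = x ^ p + y ^ p + (x ^ (p-2) + y ^ (p-2)) * (x * y) := by
        have e1 : x ^ (p-1) * x = x ^ p := rpow_sub_one_mul hx (by linarith)
        have e2 : y ^ (p-1) * y = y ^ p := rpow_sub_one_mul hy (by linarith)
        have e3 : x ^ (p-2) * x = x ^ (p-1) := rpow_sub_two_mul hx hp1
        have e4 : y ^ (p-2) * y = y ^ (p-1) := rpow_sub_two_mul hy hp1
        nlinarith [e1, e2, e3, e4]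

-- Endpoint E- (ordered version): 2^(2-p) (x-y)^p ≤ x^p + y^p - (x^(p-2)+y^(p-2)) x y, y ≤ x, p ≥ 2
lemma Eminus_aux {x y p : ℝ} (hy : 0 ≤ y) (hyx : y ≤ x) (hp : 2 ≤ p) :
    2 ^ (2 - p) * (x - y) ^ p ≤ x ^ p + y ^ p - (x ^ (p-2) + y ^ (p-2)) * (x * y) := by
  have hx : 0 ≤ x := le_trans hy hyx
  have hp1 : (1:ℝ) < p := by linarith
  have hxy : 0 ≤ x - y := by linarith
  have h1 : (x - y) ^ (p-1) + y ^ (p-1) ≤ x ^ (p-1) := by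
    have := rpow_superadd hxy hy (by linarith : (1:ℝ) ≤ p - 1)
    rwa [show x - y + y = x by ring] at this
  have h2 : (x - y) ^ p ≤ (x ^ (p-1) - y ^ (p-1)) * (x - y) := by
    rw [← rpow_sub_one_mul hxy (by linarith : (0:ℝ) < p)]
    exact mul_le_mul_of_nonneg_right (by linarith) hxy
  have hone : (2:ℝ) ^ (2 - p) ≤ 1 :=
    Real.rpow_le_one_of_one_le_of_nonpos one_le_two (by linarith)
  have hnn : 0 ≤ (x ^ (p-1) - y ^ (p-1)) * (x - y) := by
    apply mul_nonneg _ hxy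
    have := Real.rpow_le_rpow hy hyx (by linarith : (0:ℝ) ≤ p - 1)
    linarith
  have h3 : 2 ^ (2-p) * (x-y)^p ≤ (x ^ (p-1) - y ^ (p-1)) * (x - y) := by
    calc 2 ^ (2-p) * (x-y)^p ≤ 1 * ((x ^ (p-1) - y ^ (p-1)) * (x - y)) := by
          apply mul_le_mul hone h2 (Real.rpow_nonneg hxy p) (by linarith)
      _ = _ := one_mul _
  have e1 : x ^ (p-1) * x = x ^ p := rpow_sub_one_mul hx (by linarith)
  have e2 : y ^ (p-1) * y = y ^ p := rpow_sub_one_mul hy (by linarith)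
  have e3 : x ^ (p-2) * x = x ^ (p-1) := rpow_sub_two_mul hx hp1
  have e4 : y ^ (p-2) * y = y ^ (p-1) := rpow_sub_two_mul hy hp1
  nlinarith [h3, e1, e2, e3, e4]

lemma Eminus {x y p : ℝ} (hx : 0 ≤ x) (hy : 0 ≤ y) (hp : 2 ≤ p) :
    2 ^ (2 - p) * |x - y| ^ p ≤ x ^ p + y ^ p - (x ^ (p-2) + y ^ (p-2)) * (x * y) := by
  rcases le_total y x with h | h
  · rw [abs_of_nonneg (by linarith)]; exact Eminus_aux hy h hp
  · rw [abs_of_nonpos (by linarith), neg_sub]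
    have := Eminus_aux hx h hp
    linarith [this]

-- main scalar inequality, p ≥ 2
lemma key_ge2 {x y s p : ℝ} (hx : 0 ≤ x) (hy : 0 ≤ y) (hs : |s| ≤ x * y) (hp : 2 ≤ p) :
    2 ^ (2 - p) * (x^2 + y^2 - 2*s) ^ (p/2)
      ≤ x ^ p + y ^ p - (x ^ (p-2) + y ^ (p-2)) * s := by
  have hs1 : -(x*y) ≤ s := neg_le_of_abs_le hs
  have hs2 : s ≤ x*y := le_of_abs_le hs
  have hA : ((x+y)^2 : ℝ) ^ (p/2) = (x+y) ^ p := sq_rpow_half (by linarith)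
  have hB : ((x-y)^2 : ℝ) ^ (p/2) = |x-y| ^ p := by
    rw [show (x-y)^2 = |x-y|^2 by rw [sq_abs], sq_rpow_half (abs_nonneg _)]
  rcases eq_or_lt_of_le (mul_nonneg hx hy) with h0 | h0
  · -- x*y = 0, hence s = 0
    have hs0 : s = 0 := by
      have := abs_nonneg s; have := hs; rw [← h0] at this; exact abs_eq_zero.1 (le_antisymm this (abs_nonneg s))
    subst hs0
    have hE := Eminus hx hy hp
    have hxy0 : x * y = 0 := h0.symm
    have hsq : x^2 + y^2 - 2*0 = (x - y)^2 := by nlinarith [hxy0]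
    rw [hsq, hB, mul_zero, sub_zero]
    rw [hxy0, mul_zero, sub_zero] at hE
    exact hE
  · -- x*y > 0
    set lam := (x*y - s) / (2*(x*y)) with hlam
    set mu := (x*y + s) / (2*(x*y)) with hmu
    have hxyne : x*y ≠ 0 := ne_of_gt h0
    have hlam0 : 0 ≤ lam := div_nonneg (by linarith) (by linarith)
    have hmu0 : 0 ≤ mu := div_nonneg (by linarith) (by linarith)
    have hlm : lam + mu = 1 := by rw [hlam, hmu, ← add_div, div_eq_iff (mul_ne_zero two_ne_zero hxyne)]; ring
    have hlmxy : (lam - mu)*(x*y) = -s := by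
      rw [hlam, hmu, div_sub_div_same, div_mul_eq_mul_div, div_eq_iff (mul_ne_zero two_ne_zero hxyne)]
      ring
    have hconv := (convexOn_rpow (by linarith : (1:ℝ) ≤ p/2)).2
      (Set.mem_Ici.2 (sq_nonneg (x+y))) (Set.mem_Ici.2 (sq_nonneg (x-y))) hlam0 hmu0 hlm
    simp only [smul_eq_mul] at hconv
    have heq : lam * (x+y)^2 + mu * (x-y)^2 = x^2 + y^2 - 2*s := by
      linear_combination (x^2+y^2)*hlm + 2*hlmxy
    rw [heq, hA, hB] at hconv
    have h2p : (0:ℝ) < 2 ^ (2-p) := Real.rpow_pos_of_pos two_pos _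
    have hstep : 2^(2-p) * (x^2+y^2-2*s)^(p/2)
        ≤ lam*(2^(2-p)*(x+y)^p) + mu*(2^(2-p)*|x-y|^p) := by
      have h := mul_le_mul_of_nonneg_left hconv h2p.le
      nlinarith [h]
    have hEp := Eplus hx hy hp
    have hEm := Eminus hx hy hp
    have hl1 : lam*(2^(2-p)*(x+y)^p) ≤ lam*(x^p+y^p + (x^(p-2)+y^(p-2))*(x*y)) :=
      mul_le_mul_of_nonneg_left hEp hlam0
    have hl2 : mu*(2^(2-p)*|x-y|^p) ≤ mu*(x^p+y^p - (x^(p-2)+y^(p-2))*(x*y)) :=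
      mul_le_mul_of_nonneg_left hEm hmu0
    have heq2 : lam*(x^p+y^p + (x^(p-2)+y^(p-2))*(x*y))
        + mu*(x^p+y^p - (x^(p-2)+y^(p-2))*(x*y))
        = x^p + y^p - (x^(p-2)+y^(p-2))*s := by
      linear_combination (x^p+y^p)*hlm + (x^(p-2)+y^(p-2))*hlmxy
    linarith [hstep, hl1, hl2, heq2]



lemma interp {A B s w : ℝ} (hs1 : -w ≤ s) (hs2 : s ≤ w) (hp : 0 ≤ A + B*w) (hm : 0 ≤ A - B*w) :
    0 ≤ A + B*s := by
  rcases le_total 0 B with h | h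
  · nlinarith
  · nlinarith

lemma bern {x y p : ℝ} (hy : 0 ≤ y) (hyx : y ≤ x) (hp1 : 1 < p) (hp2 : p < 2) :
    (p-1) * x^(p-2) * (x - y) ≤ x^(p-1) - y^(p-1) := by
  rcases eq_or_lt_of_le (hy.trans hyx) with h | h
  · have hx0 : x = 0 := h.symm
    have hy0 : y = 0 := le_antisymm (hx0 ▸ hyx) hy
    subst hx0; subst hy0
    simp [Real.zero_rpow (show p - 2 ≠ 0 by linarith), Real.zero_rpow (show p - 1 ≠ 0 by linarith)]
  · have hxne : x ≠ 0 := ne_of_gt h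
    have hb := rpow_one_add_le_one_add_mul_self
      (s := y/x - 1) (by have := div_nonneg hy h.le; linarith)
      (p := p - 1) (by linarith) (by linarith)
    rw [show 1 + (y/x - 1) = y/x by ring] at hb
    have hb' := mul_le_mul_of_nonneg_right hb (Real.rpow_nonneg h.le (p-1))
    have hx1 : (y/x)^(p-1) * x^(p-1) = y^(p-1) := by
      rw [← Real.mul_rpow (div_nonneg hy h.le) h.le, div_mul_cancel₀ _ hxne]
    have e3 : x^(p-2) * x = x^(p-1) := rpow_sub_two_mul h.le hp1
    have e5 : x^(p-1) * (y/x) = x^(p-2) * y := by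
      rw [← e3]; field_simp
    nlinarith [hb', hx1, e5]

lemma Elt_plus_aux {x y p : ℝ} (hy : 0 ≤ y) (hyx : y ≤ x) (hp1 : 1 < p) (hp2 : p < 2) :
    (p-1) * (2*(x^2+y^2))^((p-2)/2) * (x-y)^2
      ≤ x^p + y^p - (x^(p-2)+y^(p-2))*(x*y) := by
  have hx : 0 ≤ x := hy.trans hyx
  rcases eq_or_lt_of_le hx with h | h
  · have hx0 : x = 0 := h.symm
    have hy0 : y = 0 := le_antisymm (hx0 ▸ hyx) hy
    subst hx0; subst hy0
    simp [Real.zero_rpow (show p ≠ 0 by linarith),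
      Real.zero_rpow (show (p-2)/2 ≠ 0 by intro hh; nlinarith)]
  · have hT : x^2 ≤ 2*(x^2+y^2) := by nlinarith
    have hmon : (2*(x^2+y^2))^((p-2)/2) ≤ (x^2)^((p-2)/2) :=
      Real.rpow_le_rpow_of_nonpos (by positivity) hT (by linarith)
    have hsq : (x^2 : ℝ)^((p-2)/2) = x^(p-2) := sq_rpow_half hx
    rw [hsq] at hmon
    have hK : (p-1) * (2*(x^2+y^2))^((p-2)/2) * (x-y)^2
        ≤ (p-1) * x^(p-2) * (x-y)^2 := by
      have h2 : (0:ℝ) ≤ (x-y)^2 := sq_nonneg _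
      have := mul_le_mul_of_nonneg_left hmon (by linarith : (0:ℝ) ≤ p - 1)
      exact mul_le_mul_of_nonneg_right this h2
    have hbn := bern hy hyx hp1 hp2
    have hb2 : (p-1) * x^(p-2) * (x-y)^2 ≤ (x^(p-1) - y^(p-1)) * (x-y) := by
      have := mul_le_mul_of_nonneg_right hbn (by linarith : (0:ℝ) ≤ x - y)
      nlinarith [this]
    have e1 : x ^ (p-1) * x = x ^ p := rpow_sub_one_mul hx (by linarith)
    have e2 : y ^ (p-1) * y = y ^ p := rpow_sub_one_mul hy (by linarith)
    have e3 : x ^ (p-2) * x = x ^ (p-1) := rpow_sub_two_mul hx hp1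
    have e4 : y ^ (p-2) * y = y ^ (p-1) := rpow_sub_two_mul hy hp1
    nlinarith [hK, hb2, e1, e2, e3, e4]

lemma Elt_plus {x y p : ℝ} (hx : 0 ≤ x) (hy : 0 ≤ y) (hp1 : 1 < p) (hp2 : p < 2) :
    (p-1) * (2*(x^2+y^2))^((p-2)/2) * (x-y)^2
      ≤ x^p + y^p - (x^(p-2)+y^(p-2))*(x*y) := by
  rcases le_total y x with h | h
  · exact Elt_plus_aux hy h hp1 hp2
  · have := Elt_plus_aux hx h hp1 hp2
    rw [show (y-x)^2 = (x-y)^2 from by ring, show y^2+x^2 = x^2+y^2 from by ring,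
      mul_comm y x] at this
    linarith [this]

lemma Elt_minus {x y p : ℝ} (hx : 0 ≤ x) (hy : 0 ≤ y) (hp1 : 1 < p) (hp2 : p < 2) :
    (p-1) * (2*(x^2+y^2))^((p-2)/2) * (x+y)^2
      ≤ x^p + y^p + (x^(p-2)+y^(p-2))*(x*y) := by
  rcases eq_or_lt_of_le (by positivity : (0:ℝ) ≤ x + y) with h | h
  · have hx0 : x = 0 := by nlinarith
    have hy0 : y = 0 := by nlinarith
    subst hx0; subst hy0
    simp [Real.zero_rpow (show p ≠ 0 by linarith),
      Real.zero_rpow (show (p-2)/2 ≠ 0 by intro hh; nlinarith)]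
  · have hT : (x+y)^2 ≤ 2*(x^2+y^2) := by nlinarith [sq_nonneg (x-y)]
    have hmon : (2*(x^2+y^2))^((p-2)/2) ≤ ((x+y)^2)^((p-2)/2) :=
      Real.rpow_le_rpow_of_nonpos (by positivity) hT (by linarith)
    have hsq : ((x+y)^2 : ℝ)^((p-2)/2) = (x+y)^(p-2) := sq_rpow_half h.le
    rw [hsq] at hmon
    have hK : (p-1) * (2*(x^2+y^2))^((p-2)/2) * (x+y)^2
        ≤ (p-1) * (x+y)^(p-2) * (x+y)^2 := by
      have := mul_le_mul_of_nonneg_left hmon (by linarith : (0:ℝ) ≤ p - 1)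
      exact mul_le_mul_of_nonneg_right this (sq_nonneg _)
    have e3 : (x+y)^(p-2) * (x+y) = (x+y)^(p-1) := rpow_sub_two_mul h.le hp1
    have hstep : (p-1) * (x+y)^(p-2) * (x+y)^2 ≤ (x+y)^(p-1) * (x+y) := by
      have h1 : (p-1) * (x+y)^(p-2) * (x+y)^2 = (p-1) * ((x+y)^(p-2)*(x+y)) * (x+y) := by ring
      rw [h1, e3]
      have : (p-1) * (x+y)^(p-1) ≤ (x+y)^(p-1) := by
        nlinarith [Real.rpow_nonneg h.le (p-1)]
      exact mul_le_mul_of_nonneg_right this h.le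
    have hsub : (x+y)^(p-1) ≤ x^(p-1) + y^(p-1) :=
      rpow_subadd hx hy (by linarith) (by linarith)
    have hstep2 : (x+y)^(p-1) * (x+y) ≤ (x^(p-1)+y^(p-1)) * (x+y) :=
      mul_le_mul_of_nonneg_right hsub h.le
    have e1 : x ^ (p-1) * x = x ^ p := rpow_sub_one_mul hx (by linarith)
    have e2 : y ^ (p-1) * y = y ^ p := rpow_sub_one_mul hy (by linarith)
    have e3x : x ^ (p-2) * x = x ^ (p-1) := rpow_sub_two_mul hx hp1
    have e4y : y ^ (p-2) * y = y ^ (p-1) := rpow_sub_two_mul hy hp1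
    nlinarith [hK, hstep, hstep2, e1, e2, e3x, e4y]

lemma key_lt2 {x y s p : ℝ} (hx : 0 ≤ x) (hy : 0 ≤ y) (hs : |s| ≤ x*y)
    (hp1 : 1 < p) (hp2 : p < 2) :
    (p-1) * (2*(x^2+y^2))^((p-2)/2) * (x^2+y^2-2*s)
      ≤ x^p + y^p - (x^(p-2)+y^(p-2))*s := by
  have hs1 : -(x*y) ≤ s := neg_le_of_abs_le hs
  have hs2 : s ≤ x*y := le_of_abs_le hs
  set K := (p-1) * (2*(x^2+y^2))^((p-2)/2) with hKdef
  have h1 : 0 ≤ (x^p + y^p - K*(x^2+y^2)) + (2*K - (x^(p-2)+y^(p-2)))*(x*y) := by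
    nlinarith [Elt_plus hx hy hp1 hp2]
  have h2 : 0 ≤ (x^p + y^p - K*(x^2+y^2)) - (2*K - (x^(p-2)+y^(p-2)))*(x*y) := by
    nlinarith [Elt_minus hx hy hp1 hp2]
  have := interp hs1 hs2 h1 h2
  nlinarith [this]


section VectorLemmas
variable {E : Type*} [NormedAddCommGroup E] [InnerProductSpace ℝ E]



lemma inner_expand {p : ℝ} (hp1 : 1 < p) (a b : E) :
    ⟪(‖a‖ ^ (p-2)) • a - (‖b‖ ^ (p-2)) • b, a - b⟫
      = ‖a‖^p + ‖b‖^p - (‖a‖^(p-2) + ‖b‖^(p-2)) * ⟪a, b⟫ := by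
  have ea : ‖a‖^(p-2) * (‖a‖*‖a‖) = ‖a‖^p := by
    rw [← mul_assoc, rpow_sub_two_mul (norm_nonneg a) hp1,
      rpow_sub_one_mul (norm_nonneg a) (by linarith)]
  have eb : ‖b‖^(p-2) * (‖b‖*‖b‖) = ‖b‖^p := by
    rw [← mul_assoc, rpow_sub_two_mul (norm_nonneg b) hp1,
      rpow_sub_one_mul (norm_nonneg b) (by linarith)]
  simp only [inner_sub_left, inner_sub_right, real_inner_smul_left,
    real_inner_self_eq_norm_mul_norm, real_inner_comm b a]
  linear_combination ea + eb

lemma norm_sub_sq' (a b : E) : ‖a - b‖^2 = ‖a‖^2 + ‖b‖^2 - 2*⟪a, b⟫ := by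
  rw [norm_sub_sq_real]; ring

lemma pt_ge2 {p : ℝ} (hp : 2 ≤ p) (a b : E) :
    2^(2-p) * ‖a - b‖^p ≤ ⟪(‖a‖ ^ (p-2)) • a - (‖b‖ ^ (p-2)) • b, a - b⟫ := by
  have hk := key_ge2 (norm_nonneg a) (norm_nonneg b) (abs_real_inner_le_norm a b) hp
  rw [inner_expand (by linarith) a b, ← sq_rpow_half (norm_nonneg (a-b)), norm_sub_sq' a b]
  exact hk

lemma pt_lt2 {p : ℝ} (hp1 : 1 < p) (hp2 : p < 2) (a b : E) :
    (p-1) * (2*(‖a‖^2+‖b‖^2))^((p-2)/2) * ‖a-b‖^2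
      ≤ ⟪(‖a‖ ^ (p-2)) • a - (‖b‖ ^ (p-2)) • b, a - b⟫ := by
  have hk := key_lt2 (norm_nonneg a) (norm_nonneg b) (abs_real_inner_le_norm a b) hp1 hp2
  rw [inner_expand hp1 a b, norm_sub_sq' a b]
  exact hk

lemma pt_nonneg {p : ℝ} (hp1 : 1 < p) (a b : E) :
    0 ≤ ⟪(‖a‖ ^ (p-2)) • a - (‖b‖ ^ (p-2)) • b, a - b⟫ := by
  rcases le_or_gt 2 p with h | h
  · refine le_trans ?_ (pt_ge2 h a b)
    positivity
  · refine le_trans ?_ (pt_lt2 hp1 h a b)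
    have h1 : (0:ℝ) ≤ p - 1 := by linarith
    positivity

end VectorLemmas

end PLaplaceAux

open PLaplaceAux

set_option maxHeartbeats 1000000 in
/-- Quantitative monotonicity of the `p`-Laplacian: for `u, v ∈ W^{1,p}_0(Ω)`
(modelled via their gradients on a bounded open `Ω ⊂ ℝ^N`), with
`C = max{2^{p-2}, (2^{(2-p)/2}/(p-1))^{p/2}}`, `α = min{p/2, 1}`, `β = max{2/(2-p), 0}`:
`‖u-v‖_{W^{1,p}_0}^p ≤ C (∫_Ω (|∇u|^{p-2}∇u - |∇v|^{p-2}∇v)·(∇u-∇v))^α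
  (1 + ‖∇u‖_{L^p}^p + ‖∇v‖_{L^p}^p)^β`. -/
theorem plaplacian_quantitative_monotonicity (N : ℕ)
    (Ω : Set (EuclideanSpace ℝ (Fin N))) (hΩo : IsOpen Ω) (hΩb : Bornology.IsBounded Ω)
    (p : ℝ) (hp1 : 1 < p)
    (u v : EuclideanSpace ℝ (Fin N) → ℝ)
    (Du Dv : EuclideanSpace ℝ (Fin N) → EuclideanSpace ℝ (Fin N))
    (hu : ∀ x ∈ Ω, HasGradientAt u (Du x) x)
    (hv : ∀ x ∈ Ω, HasGradientAt v (Dv x) x)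
    (hDu : MeasureTheory.IntegrableOn (fun x => ‖Du x‖ ^ p) Ω)
    (hDv : MeasureTheory.IntegrableOn (fun x => ‖Dv x‖ ^ p) Ω)
    (hDuv : MeasureTheory.IntegrableOn (fun x => ‖Du x - Dv x‖ ^ p) Ω)
    (hint : MeasureTheory.IntegrableOn
      (fun x => ⟪(‖Du x‖ ^ (p - 2)) • Du x - (‖Dv x‖ ^ (p - 2)) • Dv x, Du x - Dv x⟫) Ω) :
    ∫ x in Ω, ‖Du x - Dv x‖ ^ p ≤
      max (2 ^ (p - 2)) ((2 ^ ((2 - p) / 2) / (p - 1)) ^ (p / 2)) *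
        (∫ x in Ω, ⟪(‖Du x‖ ^ (p - 2)) • Du x - (‖Dv x‖ ^ (p - 2)) • Dv x, Du x - Dv x⟫) ^
          (min (p / 2) 1) *
        (1 + (∫ x in Ω, ‖Du x‖ ^ p) + ∫ x in Ω, ‖Dv x‖ ^ p) ^ (max (2 / (2 - p)) 0) := by
  set P : EuclideanSpace ℝ (Fin N) → ℝ :=
    fun x => ⟪(‖Du x‖ ^ (p - 2)) • Du x - (‖Dv x‖ ^ (p - 2)) • Dv x, Du x - Dv x⟫ with hP
  have hPnn : ∀ x, 0 ≤ P x := fun x => pt_nonneg hp1 (Du x) (Dv x)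
  have hInn : 0 ≤ ∫ x in Ω, P x := integral_nonneg hPnn
  have hBu : 0 ≤ ∫ x in Ω, ‖Du x‖ ^ p :=
    integral_nonneg fun x => Real.rpow_nonneg (norm_nonneg _) p
  have hBv : 0 ≤ ∫ x in Ω, ‖Dv x‖ ^ p :=
    integral_nonneg fun x => Real.rpow_nonneg (norm_nonneg _) p
  rcases le_or_gt 2 p with hp2 | hp2
  · -- p ≥ 2
    have hmin : min (p/2) 1 = 1 := min_eq_right (by linarith)
    have hmax : max (2/(2-p)) 0 = 0 :=
      max_eq_right (div_nonpos_of_nonneg_of_nonpos (by norm_num) (by linarith))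
    rw [hmin, hmax, Real.rpow_one, Real.rpow_zero, mul_one]
    have h22 : (2:ℝ)^(p-2) * 2^(2-p) = 1 := by
      rw [← Real.rpow_add two_pos]; norm_num
    have hmono : ∫ x in Ω, ‖Du x - Dv x‖ ^ p ≤ ∫ x in Ω, 2^(p-2) * P x := by
      apply integral_mono_of_nonneg
      · exact .of_forall fun x => Real.rpow_nonneg (norm_nonneg _) p
      · exact hint.const_mul _
      · refine .of_forall fun x => ?_
        have h := pt_ge2 hp2 (Du x) (Dv x)
        have hc : (0:ℝ) ≤ 2^(p-2) := (Real.rpow_pos_of_pos two_pos _).le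
        calc ‖Du x - Dv x‖ ^ p = 2^(p-2) * (2^(2-p) * ‖Du x - Dv x‖^p) := by
              rw [← mul_assoc, h22, one_mul]
          _ ≤ 2^(p-2) * P x := mul_le_mul_of_nonneg_left h hc
    rw [integral_const_mul] at hmono
    refine hmono.trans ?_
    exact mul_le_mul_of_nonneg_right (le_max_left _ _) hInn
  · -- 1 < p < 2
    have hΩm : MeasurableSet Ω := hΩo.measurableSet
    have hpos : (0:ℝ) < p := by linarith
    have h2p : (0:ℝ) < 2 - p := by linarith
    -- measurability of Du, Dv
    have hgradm : ∀ w : EuclideanSpace ℝ (Fin N) → ℝ, Measurable (fun x => gradient w x) := by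
      intro w
      exact ((InnerProductSpace.toDual ℝ
        (EuclideanSpace ℝ (Fin N))).symm.continuous.measurable).comp (measurable_fderiv ℝ w)
    have hDum : AEMeasurable Du (volume.restrict Ω) := by
      refine ((hgradm u).aemeasurable).congr ?_
      rw [Filter.EventuallyEq, ae_restrict_iff' hΩm]
      exact .of_forall fun x hx => (hu x hx).gradient
    have hDvm : AEMeasurable Dv (volume.restrict Ω) := by
      refine ((hgradm v).aemeasurable).congr ?_
      rw [Filter.EventuallyEq, ae_restrict_iff' hΩm]
      exact .of_forall fun x hx => (hv x hx).gradient
    set S : EuclideanSpace ℝ (Fin N) → ℝ := fun x => ‖Du x‖^2 + ‖Dv x‖^2 with hSdef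
    set F : EuclideanSpace ℝ (Fin N) → ℝ :=
      fun x => ‖Du x - Dv x‖^2 * S x ^ ((p-2)/2) with hFdef
    set G : EuclideanSpace ℝ (Fin N) → ℝ := fun x => S x ^ (p/2) with hGdef
    set f : EuclideanSpace ℝ (Fin N) → ℝ := fun x => F x ^ (p/2) with hfdef
    set g : EuclideanSpace ℝ (Fin N) → ℝ := fun x => G x ^ ((2-p)/2) with hgdef
    set c : ℝ := 2^((2-p)/2)/(p-1) with hcdef
    have hSnn : ∀ x, 0 ≤ S x := fun x => by positivity
    have hFnn : ∀ x, 0 ≤ F x := fun x => by positivity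
    have hGnn : ∀ x, 0 ≤ G x := fun x => by positivity
    have hfnn : ∀ x, 0 ≤ f x := fun x => by positivity
    have hgnn : ∀ x, 0 ≤ g x := fun x => by positivity
    have hcnn : (0:ℝ) ≤ c := by
      rw [hcdef]
      exact div_nonneg (Real.rpow_nonneg (by norm_num) _) (by linarith)
    -- measurability of auxiliary functions
    have hSm : AEMeasurable S (volume.restrict Ω) := by
      have h1 := hDum.norm; have h2 := hDvm.norm
      have : S = fun x => ‖Du x‖*‖Du x‖ + ‖Dv x‖*‖Dv x‖ := by
        funext x; rw [hSdef]; ring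
      rw [this]; exact (h1.mul h1).add (h2.mul h2)
    have hdm : AEMeasurable (fun x => ‖Du x - Dv x‖) (volume.restrict Ω) := (hDum.sub hDvm).norm
    have hFm : AEMeasurable F (volume.restrict Ω) := by
      have : F = fun x => ‖Du x - Dv x‖*‖Du x - Dv x‖ * S x ^ ((p-2)/2) := by
        funext x; rw [hFdef]; ring
      rw [this]; exact (hdm.mul hdm).mul (hSm.pow aemeasurable_const)
    have hGm : AEMeasurable G (volume.restrict Ω) := hSm.pow aemeasurable_const
    have hfm : AEMeasurable f (volume.restrict Ω) := hFm.pow aemeasurable_const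
    have hgm : AEMeasurable g (volume.restrict Ω) := hGm.pow aemeasurable_const
    -- pointwise bound F ≤ c * P
    have hc1 : c * ((p-1) * 2^((p-2)/2)) = 1 := by
      have h22 : (2:ℝ)^((2-p)/2) * 2^((p-2)/2) = 1 := by
        rw [← Real.rpow_add two_pos, show (2-p)/2+(p-2)/2 = (0:ℝ) by ring, Real.rpow_zero]
      have hpne1 : p - 1 ≠ 0 := by linarith
      calc c * ((p-1) * 2^((p-2)/2))
          = (2^((2-p)/2) * 2^((p-2)/2)) * ((p-1)/(p-1)) := by rw [hcdef]; ring
        _ = 1 := by rw [h22, div_self hpne1, mul_one]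
    have hFP : ∀ x, F x ≤ c * P x := by
      intro x
      have hk := pt_lt2 hp1 hp2 (Du x) (Dv x)
      have hsplit : (2*(S x))^((p-2)/2) = 2^((p-2)/2) * (S x)^((p-2)/2) :=
        Real.mul_rpow (by norm_num) (hSnn x)
      have hkey : ((p-1) * 2^((p-2)/2)) * F x ≤ P x := by
        calc ((p-1) * 2^((p-2)/2)) * F x
            = (p-1) * (2^((p-2)/2) * (S x)^((p-2)/2)) * ‖Du x - Dv x‖^2 := by
              rw [hFdef]; ring
          _ = (p-1) * ((2*(S x))^((p-2)/2)) * ‖Du x - Dv x‖^2 := by rw [hsplit]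
          _ ≤ P x := hk
      have hmul := mul_le_mul_of_nonneg_left hkey hcnn
      calc F x = c * ((p-1) * 2^((p-2)/2)) * F x := by rw [hc1, one_mul]
        _ = c * (((p-1) * 2^((p-2)/2)) * F x) := by ring
        _ ≤ c * P x := hmul
    -- integrability
    have hFint : Integrable F (volume.restrict Ω) := by
      refine Integrable.mono' (hint.const_mul c) hFm.aestronglyMeasurable (.of_forall fun x => ?_)
      rw [Real.norm_of_nonneg (hFnn x)]; exact hFP x
    have hGle : ∀ x, G x ≤ ‖Du x‖^p + ‖Dv x‖^p := by
      intro x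
      have h := rpow_subadd (sq_nonneg ‖Du x‖) (sq_nonneg ‖Dv x‖)
        (by linarith : (0:ℝ) ≤ p/2) (by linarith : p/2 ≤ 1)
      rwa [sq_rpow_half (norm_nonneg (Du x)), sq_rpow_half (norm_nonneg (Dv x))] at h
    have hGint : Integrable G (volume.restrict Ω) := by
      refine Integrable.mono' (hDu.add hDv) hGm.aestronglyMeasurable (.of_forall fun x => ?_)
      rw [Real.norm_of_nonneg (hGnn x)]; exact hGle x
    -- Memℒp
    have hne0p : ENNReal.ofReal (2/p) ≠ 0 := by
      simp only [ne_eq, ENNReal.ofReal_eq_zero, not_le]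
      positivity
    have hne0q : ENNReal.ofReal (2/(2-p)) ≠ 0 := by
      simp only [ne_eq, ENNReal.ofReal_eq_zero, not_le]
      exact div_pos (by norm_num) h2p
    have hf_mem : MemLp f (ENNReal.ofReal (2/p)) (volume.restrict Ω) := by
      refine (memLp_norm_rpow_iff (q := ENNReal.ofReal (2/p)) hfm.aestronglyMeasurable
        hne0p ENNReal.ofReal_ne_top).1 ?_
      rw [ENNReal.div_self hne0p ENNReal.ofReal_ne_top, memLp_one_iff_integrable]
      have heq : (fun x => ‖f x‖ ^ (ENNReal.ofReal (2/p)).toReal) = F := by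
        funext x
        rw [ENNReal.toReal_ofReal (by positivity), Real.norm_of_nonneg (hfnn x)]
        simp only [hfdef]
        rw [← Real.rpow_mul (hFnn x), show (p/2)*(2/p) = 1 by field_simp, Real.rpow_one]
      rw [heq]; exact hFint
    have hg_mem : MemLp g (ENNReal.ofReal (2/(2-p))) (volume.restrict Ω) := by
      refine (memLp_norm_rpow_iff (q := ENNReal.ofReal (2/(2-p))) hgm.aestronglyMeasurable
        hne0q ENNReal.ofReal_ne_top).1 ?_
      rw [ENNReal.div_self hne0q ENNReal.ofReal_ne_top, memLp_one_iff_integrable]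
      have heq : (fun x => ‖g x‖ ^ (ENNReal.ofReal (2/(2-p))).toReal) = G := by
        funext x
        rw [ENNReal.toReal_ofReal (div_nonneg (by norm_num) h2p.le),
          Real.norm_of_nonneg (hgnn x)]
        simp only [hgdef]
        rw [← Real.rpow_mul (hGnn x), show ((2-p)/2)*(2/(2-p)) = 1 by field_simp,
          Real.rpow_one]
      rw [heq]; exact hGint
    -- Hölder
    have hpq : Real.HolderConjugate (2/p) (2/(2-p)) := by
      refine Real.holderConjugate_iff.2 ⟨?_, ?_⟩
      · rw [lt_div_iff₀ hpos]; linarith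
      · rw [inv_div, inv_div]; ring
    have hH := integral_mul_le_Lp_mul_Lq_of_nonneg (μ := volume.restrict Ω) hpq
      (.of_forall hfnn) (.of_forall hgnn) hf_mem hg_mem
    have e1 : ∫ a in Ω, f a ^ (2/p) = ∫ a in Ω, F a := by
      refine integral_congr_ae (.of_forall fun x => ?_)
      simp only [hfdef]
      rw [← Real.rpow_mul (hFnn x), show (p/2)*(2/p) = 1 by field_simp, Real.rpow_one]
    have e2 : ∫ a in Ω, g a ^ (2/(2-p)) = ∫ a in Ω, G a := by
      refine integral_congr_ae (.of_forall fun x => ?_)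
      simp only [hgdef]
      rw [← Real.rpow_mul (hGnn x), show ((2-p)/2)*(2/(2-p)) = 1 by field_simp, Real.rpow_one]
    rw [e1, e2, one_div_div, one_div_div] at hH
    -- pointwise product identity
    have hfg : ∀ x, f x * g x = ‖Du x - Dv x‖ ^ p := by
      intro x
      rcases eq_or_lt_of_le (hSnn x) with hS0 | hSpos
      · have hS0' : ‖Du x‖^2 + ‖Dv x‖^2 = 0 := by
          have h := hS0.symm
          simpa only [hSdef] using h
        have h1 : ‖Du x‖ = 0 := by
          have h2 : ‖Du x‖^2 = 0 := by nlinarith [sq_nonneg ‖Du x‖, sq_nonneg ‖Dv x‖]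
          exact pow_eq_zero_iff (n := 2) (by norm_num) |>.1 h2
        have h2 : ‖Dv x‖ = 0 := by
          have h2 : ‖Dv x‖^2 = 0 := by nlinarith [sq_nonneg ‖Du x‖, sq_nonneg ‖Dv x‖]
          exact pow_eq_zero_iff (n := 2) (by norm_num) |>.1 h2
        have hdu : Du x = 0 := norm_eq_zero.1 h1
        have hdv : Dv x = 0 := norm_eq_zero.1 h2
        have hd0 : ‖Du x - Dv x‖ = 0 := by rw [hdu, hdv, sub_zero, norm_zero]
        have hSx : S x = 0 := hS0.symm
        simp only [hfdef, hFdef, hgdef, hGdef, hd0, hSx]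
        rw [show ((0:ℝ))^2 = 0 by norm_num, zero_mul,
          Real.zero_rpow (show p/2 ≠ 0 by positivity), zero_mul,
          Real.zero_rpow (show p ≠ 0 by linarith)]
      · have hd2 : (0:ℝ) ≤ ‖Du x - Dv x‖^2 := sq_nonneg _
        have hfx : f x = ‖Du x - Dv x‖^p * (S x) ^ (((p-2)/2)*(p/2)) := by
          simp only [hfdef, hFdef]
          rw [Real.mul_rpow hd2 (Real.rpow_nonneg (hSnn x) _),
            sq_rpow_half (norm_nonneg _), ← Real.rpow_mul (hSnn x)]
        have hgx : g x = (S x) ^ ((p/2)*((2-p)/2)) := by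
          simp only [hgdef, hGdef]
          rw [← Real.rpow_mul (hSnn x)]
        rw [hfx, hgx, mul_assoc, ← Real.rpow_add hSpos,
          show ((p-2)/2)*(p/2) + (p/2)*((2-p)/2) = 0 by ring, Real.rpow_zero, mul_one]
    have e0 : ∫ x in Ω, ‖Du x - Dv x‖ ^ p = ∫ x in Ω, f x * g x :=
      integral_congr_ae (.of_forall fun x => (hfg x).symm)
    -- assemble
    set B : ℝ := 1 + (∫ x in Ω, ‖Du x‖ ^ p) + ∫ x in Ω, ‖Dv x‖ ^ p with hBdef
    have hB1 : (1:ℝ) ≤ B := by rw [hBdef]; linarith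
    have hIF : ∫ x in Ω, F x ≤ c * ∫ x in Ω, P x := by
      have h := integral_mono hFint (hint.const_mul c) hFP
      rwa [integral_const_mul] at h
    have h1 : (∫ x in Ω, F x) ^ (p/2) ≤ c^(p/2) * (∫ x in Ω, P x)^(p/2) := by
      calc (∫ x in Ω, F x) ^ (p/2) ≤ (c * ∫ x in Ω, P x) ^ (p/2) :=
            Real.rpow_le_rpow (integral_nonneg hFnn) hIF (by positivity)
        _ = c^(p/2) * (∫ x in Ω, P x)^(p/2) := Real.mul_rpow hcnn hInn
    have hIG : ∫ x in Ω, G x ≤ B := by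
      have hadd : Integrable (fun x => ‖Du x‖^p + ‖Dv x‖^p) (volume.restrict Ω) := hDu.add hDv
      have h : ∫ x in Ω, G x ≤ ∫ x in Ω, (‖Du x‖^p + ‖Dv x‖^p) := integral_mono hGint hadd hGle
      have h' : ∫ x in Ω, (‖Du x‖^p + ‖Dv x‖^p)
          = (∫ x in Ω, ‖Du x‖^p) + ∫ x in Ω, ‖Dv x‖^p := integral_add hDu hDv
      rw [hBdef]; linarith [h, h']
    have h2 : (∫ x in Ω, G x) ^ ((2-p)/2) ≤ B ^ (2/(2-p)) := by
      calc (∫ x in Ω, G x) ^ ((2-p)/2) ≤ B ^ ((2-p)/2) :=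
            Real.rpow_le_rpow (integral_nonneg hGnn) hIG (by linarith)
        _ ≤ B ^ (2/(2-p)) := by
            apply Real.rpow_le_rpow_of_exponent_le hB1
            rw [div_le_div_iff₀ (by norm_num) h2p]
            nlinarith
    have hmin : min (p/2) 1 = p/2 := min_eq_left (by linarith)
    have hmax : max (2/(2-p)) 0 = 2/(2-p) := max_eq_left (div_nonneg (by norm_num) h2p.le)
    rw [hmin, hmax]
    calc ∫ x in Ω, ‖Du x - Dv x‖ ^ p = ∫ x in Ω, f x * g x := e0
      _ ≤ (∫ x in Ω, F x) ^ (p/2) * (∫ x in Ω, G x) ^ ((2-p)/2) := hH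
      _ ≤ (c^(p/2) * (∫ x in Ω, P x)^(p/2)) * (B ^ (2/(2-p))) := by
          apply mul_le_mul h1 h2 (Real.rpow_nonneg (integral_nonneg hGnn) _)
          positivity
      _ ≤ (max (2^(p-2)) (c^(p/2)) * (∫ x in Ω, P x)^(p/2)) * (B ^ (2/(2-p))) := by
          apply mul_le_mul_of_nonneg_right _ (Real.rpow_nonneg (by linarith) _)
          exact mul_le_mul_of_nonneg_right (le_max_right _ _) (Real.rpow_nonneg hInn _)
      _ = max (2^(p-2)) (c^(p/2)) * (∫ x in Ω, P x)^(p/2) * B ^ (2/(2-p)) := by ring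
end
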